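/- arXiv:1708.08656 — 5 statements merged into one kernel-verified Lean document; each statement's English description precedes it below -/
import Mathlib

section
/- Let a, b, c, d be complex numbers with ad - bc = 1, c ≠ 0, and a + d = ±2. If p ∈ ℂ satisfies |p + d/c| = |p - a/c|, then d/c + (conjugate of (cp - a))/c = -p. -/
theorem d_div_c_add_conj (a b c d : ℂ)
    (hdet : a * d - b * c = 1) (hc : c ≠ 0) (htr : a + d = 2 ∨ a + d = -2)
    (p : ℂ) (hp : ‖p + d / c‖ = ‖p - a / c‖) :
    d / c + (starRingEnd ℂ (c * p - a)) / c = -p := by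
  have hp2 : ‖c * p + d‖ = ‖c * p - a‖ := by
    have h1 : c * p + d = c * (p + d / c) := by field_simp
    have h2 : c * p - a = c * (p - a / c) := by field_simp
    rw [h1, h2, norm_mul, norm_mul, hp]
  have hn : Complex.normSq (c * p + d) = Complex.normSq (c * p - a) := by
    rw [← Complex.sq_norm, ← Complex.sq_norm, hp2]
  have e : (c * p + d) * (starRingEnd ℂ) (c * p + d)
      = (c * p - a) * (starRingEnd ℂ) (c * p - a) := by
    rw [Complex.mul_conj, Complex.mul_conj, hn]
  have e' : (c * p + d) * ((starRingEnd ℂ) c * (starRingEnd ℂ) p + (starRingEnd ℂ) d)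
      = (c * p - a) * ((starRingEnd ℂ) c * (starRingEnd ℂ) p - (starRingEnd ℂ) a) := by
    simpa [map_add, map_sub, map_mul] using e
  have key : (starRingEnd ℂ) (c * p - a) = -(c * p + d) := by
    rw [map_sub, map_mul]
    rcases htr with ht | ht
    · have hd : d = 2 - a := by linear_combination ht
      have hD : (starRingEnd ℂ) d = 2 - (starRingEnd ℂ) a := by
        rw [hd, map_sub]; rw [map_ofNat]
      rw [hD, hd] at e'
      rw [hd]
      linear_combination e' / 2
    · have hd : d = -2 - a := by linear_combination ht
      have hD : (starRingEnd ℂ) d = -2 - (starRingEnd ℂ) a := by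
        rw [hd, map_sub, map_neg, map_ofNat]
      rw [hD, hd] at e'
      rw [hd]
      linear_combination -e' / 2
  rw [key]
  field_simp
  ring
end

section
/- Let a, b, c, d be complex numbers with ad - bc = 1, c ≠ 0, and a + d = ±2, let α = (a - d)/(2c), and let p ∈ ℂ satisfy |p + d/c| = |p - a/c| with p ≠ α. For z ∈ ℂ with cz + d ≠ 0, one has |z - p| = |α - p| if and only if |(az + b)/(cz + d) - p| = |α - p|. -/
theorem key_horo (a b c d : ℂ) (hdet : a * d - b * c = 1) (hc : c ≠ 0)
    (htr : a + d = 2) (α p z : ℂ) (hα : α = (a - d) / (2 * c))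
    (hp : ‖p + d / c‖ = ‖p - a / c‖)
    (hz : c * z + d ≠ 0) :
    ‖z - p‖ = ‖α - p‖ ↔
      ‖(a * z + b) / (c * z + d) - p‖ = ‖α - p‖ := by
  have hd : d = 1 - c * α := by
    field_simp at hα
    linear_combination (htr + hα) / 2
  subst hd
  have ha : a = 1 + c * α := by linear_combination htr
  subst ha
  have hb : b = -c * α ^ 2 := by
    refine mul_right_cancel₀ hc ?_
    linear_combination -hdet
  subst hb
  -- hp to complex relation h5
  have hC : (starRingEnd ℂ) c ≠ 0 := by simpa using hc
  have hp2 : Complex.normSq (p + (1 - c * α) / c) = Complex.normSq (p - (1 + c * α) / c) := by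
    rw [← Complex.sq_norm, ← Complex.sq_norm, hp]
  have hp3 : (p + (1 - c * α) / c) * (starRingEnd ℂ) (p + (1 - c * α) / c)
      = (p - (1 + c * α) / c) * (starRingEnd ℂ) (p - (1 + c * α) / c) := by
    rw [Complex.mul_conj, Complex.mul_conj, hp2]
  simp only [map_add, map_sub, map_mul, map_div₀, map_one] at hp3
  field_simp at hp3
  have h5 : (p - α) * c + ((starRingEnd ℂ) p - (starRingEnd ℂ) α) * (starRingEnd ℂ) c = 0 := by
    linear_combination hp3 / 2
  -- key complex identity
  set N : ℂ := (1 + c * α) * z + -c * α ^ 2 - p * (c * z + (1 - c * α)) with hN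
  have hcx : N * (starRingEnd ℂ) N
      = (z - p) * (starRingEnd ℂ) (z - p)
        + (α - p) * (starRingEnd ℂ) (α - p)
          * ((c * z + (1 - c * α)) * (starRingEnd ℂ) (c * z + (1 - c * α)) - 1) := by
    simp only [hN, map_add, map_sub, map_mul, map_neg, map_one, map_pow, map_ofNat]
    linear_combination (-(z - α) * ((starRingEnd ℂ) z - (starRingEnd ℂ) α)) * h5
  -- real key identity
  have key : (‖N‖) ^ 2
      = (‖z - p‖) ^ 2
        + (‖α - p‖) ^ 2 * ((‖c * z + (1 - c * α)‖) ^ 2 - 1) := by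
    have h := hcx
    rw [Complex.mul_conj, Complex.mul_conj, Complex.mul_conj, Complex.mul_conj] at h
    simp only [Complex.sq_norm]
    exact_mod_cast h
  -- rewrite the RHS quotient
  have hq : ((1 + c * α) * z + -c * α ^ 2) / (c * z + (1 - c * α)) - p
      = N / (c * z + (1 - c * α)) := by
    rw [hN]; field_simp
  rw [hq, norm_div]
  have hT : 0 < ‖c * z + (1 - c * α)‖ := by
    simpa [norm_pos_iff] using hz
  constructor
  · intro h
    rw [div_eq_iff (ne_of_gt hT)]
    have h2 : (‖N‖) ^ 2
        = (‖α - p‖ * ‖c * z + (1 - c * α)‖) ^ 2 := by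
      rw [key, h]; ring
    exact (pow_left_inj₀ (by positivity) (by positivity) two_ne_zero).mp h2
  · intro h
    rw [div_eq_iff (ne_of_gt hT)] at h
    have h2 : (‖z - p‖) ^ 2 = (‖α - p‖) ^ 2 := by
      have : (‖N‖) ^ 2
          = (‖α - p‖) ^ 2 * (‖c * z + (1 - c * α)‖) ^ 2 := by
        rw [h]; ring
      nlinarith [key, this]
    exact (pow_left_inj₀ (by positivity) (by positivity) two_ne_zero).mp h2


theorem horocycle_invariant (a b c d : ℂ)
    (hdet : a * d - b * c = 1) (hc : c ≠ 0) (htr : a + d = 2 ∨ a + d = -2)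
    (α : ℂ) (hα : α = (a - d) / (2 * c))
    (p : ℂ) (hp : ‖p + d / c‖ = ‖p - a / c‖) (hpα : p ≠ α)
    (z : ℂ) (hz : c * z + d ≠ 0) :
    ‖z - p‖ = ‖α - p‖ ↔
      ‖(a * z + b) / (c * z + d) - p‖ = ‖α - p‖ := by
  rcases htr with htr | htr
  · exact key_horo a b c d hdet hc htr α p z hα hp hz
  · have h := key_horo (-a) (-b) (-c) (-d) (by linear_combination hdet)
      (neg_ne_zero.mpr hc) (by linear_combination -htr) α p z
      (by rw [hα]; ring) (by
        have h1 : -d / -c = d / c := neg_div_neg_eq d c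
        have h2 : -a / -c = a / c := neg_div_neg_eq a c
        rw [h1, h2]; exact hp)
      (by intro h; apply hz; linear_combination -h)
    have hqe : (-a * z + -b) / (-c * z + -d) = (a * z + b) / (c * z + d) := by
      rw [show -a * z + -b = -(a * z + b) by ring, show -c * z + -d = -(c * z + d) by ring,
        neg_div_neg_eq]
    rw [hqe] at h
    exact h
end

section
/- Let q be a nonzero complex number and g(z) = z + q. Then the difference equation b_{n+1} = g(b_n) does not have Hyers-Ulam stability: there exists ε > 0 and a sequence (a_n) in ℂ with |a_{n+1} - g(a_n)| ≤ ε for all n, such that for every sequence (b_n) with b_{n+1} = g(b_n) for all n, the differences |a_n - b_n| are unbounded. -/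
theorem translation_no_hyers_ulam (q : ℂ) (hq : q ≠ 0) :
    ∃ ε > (0 : ℝ), ∃ a : ℕ → ℂ,
      (∀ n : ℕ, ‖a (n + 1) - (a n + q)‖ ≤ ε) ∧
      ∀ b : ℕ → ℂ, (∀ n : ℕ, b (n + 1) = b n + q) →
        ∀ M : ℝ, ∃ n : ℕ, ‖a n - b n‖ > M := by
  refine ⟨‖q‖, by simpa using hq, fun n => 2 * n * q, fun n => ?_, ?_⟩
  · have : (2 : ℂ) * (n + 1) * q - (2 * n * q + q) = q := by ring
    simp only []
    push_cast
    rw [this]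
  · intro b hb M
    have hbn : ∀ n : ℕ, b n = b 0 + n * q := by
      intro n
      induction n with
      | zero => simp
      | succ k ih => rw [hb k, ih]; push_cast; ring
    obtain ⟨n, hn⟩ := exists_nat_gt ((M + ‖b 0‖) / ‖q‖)
    refine ⟨n, ?_⟩
    have hqpos : (0:ℝ) < ‖q‖ := by simpa using hq
    have h1 : M + ‖b 0‖ < n * ‖q‖ := by
      rwa [div_lt_iff₀ hqpos] at hn
    have h2 : (2:ℂ) * n * q - b n = n * q - b 0 := by rw [hbn n]; ring
    rw [h2]
    calc M < n * ‖q‖ - ‖b 0‖ := by linarith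
    _ = ‖(n : ℂ) * q‖ - ‖b 0‖ := by
        rw [norm_mul]; simp
    _ ≤ ‖(n : ℂ) * q - b 0‖ := by
        have := norm_sub_norm_le ((n:ℂ)*q) (b 0)
        linarith
end

section
/- Let a, b, c, d be real numbers with ad - bc = 1, c ≠ 0, a + d = ±2, and (a + d)c > 0, and let α = (a - d)/(2c). If -d/c < x < α, then the backward orbit satisfies x < g⁻¹(x) < g⁻²(x) < ⋯ < α and g⁻ⁿ(x) → α as n → ∞, where g⁻¹(x) = (dx - b)/(-cx + a). -/
open Filter Topology

theorem real_parabolic_backward_orbit (a b c d : ℝ)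
    (hdet : a * d - b * c = 1) (hc : c ≠ 0) (htr : a + d = 2 ∨ a + d = -2)
    (hsign : (a + d) * c > 0) (α : ℝ) (hα : α = (a - d) / (2 * c))
    (ginv : ℝ → ℝ) (hginv : ∀ y : ℝ, ginv y = (d * y - b) / (-c * y + a))
    (x : ℝ) (hx1 : -d / c < x) (hx2 : x < α) :
    StrictMono (fun n : ℕ => ginv^[n] x) ∧ (∀ n : ℕ, ginv^[n] x < α) ∧
      Tendsto (fun n : ℕ => ginv^[n] x) atTop (𝓝 α) := by
  have h4 : (a + d) ^ 2 = 4 := by rcases htr with h | h <;> rw [h] <;> norm_num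
  have hαc : 2 * c * α = a - d := by
    rw [hα]; field_simp
  have hb0 : c * (c * α ^ 2 + b) = 0 := by
    linear_combination ((2 * c * α + (a - d)) / 4) * hαc + (1 / 4) * h4 - hdet
  have hb : c * α ^ 2 = -b := by
    rcases mul_eq_zero.mp hb0 with h | h
    · exact absurd h hc
    · linarith
  have hid : ∀ y : ℝ, (a + d) * (a - c * y) = 2 + (a + d) * c * (α - y) := by
    intro y
    linear_combination (-(a + d) / 2) * hαc + (1 / 2) * h4
  have hden : ∀ y : ℝ, y ≤ α → (a + d) * (a - c * y) ≥ 2 := by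
    intro y hy
    have h1 : (a + d) * c * (α - y) ≥ 0 :=
      mul_nonneg hsign.le (sub_nonneg.mpr hy)
    linarith [hid y]
  have hident : ∀ y : ℝ, d * y - b - y * (-c * y + a) = c * (y - α) ^ 2 := by
    intro y; linear_combination y * hαc - hb
  have hident2 : ∀ y : ℝ, α * (-c * y + a) - (d * y - b) = (c * α + d) * (α - y) := by
    intro y; linear_combination (-α) * hαc + hb
  have hstep : ∀ y : ℝ, y < α → y < ginv y ∧ ginv y < α := by
    intro y hy
    have hD : (a + d) * (a - c * y) ≥ 2 := hden y hy.le
    rw [hginv]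
    have hsq : (y - α) ^ 2 > 0 :=
      lt_of_le_of_ne (sq_nonneg _) (Ne.symm (pow_ne_zero 2 (sub_ne_zero.mpr hy.ne)))
    rcases htr with h2 | h2
    · -- a + d = 2
      have hcpos : 0 < c := by nlinarith
      have hdpos : 0 < -c * y + a := by nlinarith
      have hcd : c * α + d = 1 := by linarith
      constructor
      · rw [lt_div_iff₀ hdpos]
        nlinarith [hident y]
      · rw [div_lt_iff₀ hdpos]
        nlinarith [hident2 y]
    · -- a + d = -2
      have hcneg : c < 0 := by nlinarith
      have hdneg : -c * y + a < 0 := by nlinarith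
      have hcd : c * α + d = -1 := by linarith
      constructor
      · rw [lt_div_iff_of_neg hdneg]
        nlinarith [hident y]
      · rw [div_lt_iff_of_neg hdneg]
        nlinarith [hident2 y]
  have hlt : ∀ n : ℕ, ginv^[n] x < α ∧ ginv^[n] x < ginv^[n + 1] x := by
    intro n
    induction n with
    | zero =>
      refine ⟨hx2, ?_⟩
      simpa using (hstep x hx2).1
    | succ n ih =>
      have h1 : ginv^[n + 1] x < α := by
        rw [Function.iterate_succ_apply']
        exact (hstep _ ih.1).2
      refine ⟨h1, ?_⟩
      rw [Function.iterate_succ_apply' ginv (n + 1)]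
      exact (hstep _ h1).1
  have hmono : StrictMono fun n : ℕ => ginv^[n] x :=
    strictMono_nat_of_lt_succ fun n => (hlt n).2
  have hbound : ∀ n : ℕ, ginv^[n] x < α := fun n => (hlt n).1
  have hbdd : BddAbove (Set.range fun n : ℕ => ginv^[n] x) := by
    refine ⟨α, ?_⟩
    rintro z ⟨n, rfl⟩
    exact (hbound n).le
  set L := ⨆ n : ℕ, ginv^[n] x with hL
  have htend : Tendsto (fun n : ℕ => ginv^[n] x) atTop (𝓝 L) :=
    tendsto_atTop_ciSup hmono.monotone hbdd
  have hLα : L ≤ α := ciSup_le fun n => (hbound n).le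
  have hLeq : L = α := by
    by_contra hne
    have hLlt : L < α := lt_of_le_of_ne hLα hne
    have hDL : (a + d) * (a - c * L) ≥ 2 := hden L hLα
    have hDL0 : -c * L + a ≠ 0 := by
      intro h
      have : a - c * L = 0 := by linarith
      rw [this, mul_zero] at hDL
      linarith
    have hcont : ContinuousAt ginv L := by
      have heq : ginv = fun y => (d * y - b) / (-c * y + a) := funext hginv
      rw [heq]
      exact ContinuousAt.div (by fun_prop) (by fun_prop) hDL0
    have h1 : Tendsto (fun n : ℕ => ginv^[n + 1] x) atTop (𝓝 (ginv L)) := by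
      have := hcont.tendsto.comp htend
      simpa [Function.comp_def, Function.iterate_succ_apply'] using this
    have h2 : Tendsto (fun n : ℕ => ginv^[n + 1] x) atTop (𝓝 L) :=
      htend.comp (tendsto_add_atTop_nat 1)
    have hfix : ginv L = L := tendsto_nhds_unique h1 h2
    have := (hstep L hLlt).1
    rw [hfix] at this
    exact lt_irrefl L this
  rw [hLeq] at htend
  exact ⟨hmono, hbound, htend⟩
end

section
/- Let a, b, c, d be real numbers with ad - bc = 1, c ≠ 0, and a + d = ±2, and let g(x) = (ax + b)/(cx + d) with (a + d)c > 0. If x < -d/c, then α < g²(x) = g(g(x)) < a/c, where α = (a - d)/(2c). -/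
theorem real_parabolic_second_image (a b c d : ℝ)
    (hdet : a * d - b * c = 1) (hc : c ≠ 0) (htr : a + d = 2 ∨ a + d = -2)
    (hsign : (a + d) * c > 0) (α : ℝ) (hα : α = (a - d) / (2 * c))
    (g : ℝ → ℝ) (hg : ∀ y : ℝ, g y = (a * y + b) / (c * y + d))
    (x : ℝ) (hx : x < -d / c) :
    α < g (g x) ∧ g (g x) < a / c := by
  have hc2 : (0:ℝ) < c^2 := by positivity
  have hAD : (a+d)^2 = 4 := by rcases htr with h|h <;> rw [h] <;> norm_num
  have e0 : (-d/c)*c^2 = -(d*c) := by field_simp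
  have hu : c*(c*x+d) < 0 := by
    have := mul_lt_mul_of_pos_right hx hc2
    nlinarith [this]
  have hu0 : c*x+d ≠ 0 := by
    intro h; rw [h] at hu; simp at hu
  have key1 : (g x - a/c)*(c*(c*x+d)) = -1 := by
    rw [hg]; have hq := div_mul_cancel₀ (a*x+b) hu0; have hc' := div_mul_cancel₀ a hc
    linear_combination c*hq - (c*x+d)*hc' - hdet
  have h1 : a/c < g x := by nlinarith [key1, hu]
  have e2 : (a/c - α)*(2*c^2) = (a+d)*c := by rw [hα]; field_simp; ring
  have hαlt : α < a/c := by nlinarith [e2]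
  have hv : 0 < c*(c * g x + d) := by
    have h2 := mul_lt_mul_of_pos_left h1 hc2
    have e3 : c^2*(a/c) = a*c := by field_simp
    nlinarith [h2]
  have hv0 : c * g x + d ≠ 0 := by
    intro h; rw [h] at hv; simp at hv
  have key2 : (g (g x) - a/c)*(c*(c*g x + d)) = -1 := by
    rw [hg (g x)]; have hq := div_mul_cancel₀ (a*g x+b) hv0; have hc' := div_mul_cancel₀ a hc
    linear_combination c*hq - (c*g x+d)*hc' - hdet
  have key3 : (g (g x) - α)*(2*(c*(c* g x + d))) = (a+d)*c*(g x - α) := by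
    rw [hg (g x), hα]; have hq := div_mul_cancel₀ (a*g x+b) hv0
    have hα2 := div_mul_cancel₀ (a-d) (mul_ne_zero (two_ne_zero (α := ℝ)) hc)
    linear_combination 2*c*hq - (c*g x+d)*hα2 + (a+d)/2*hα2 - 2*hdet + hAD/2
  constructor
  · nlinarith [key3, hv, hsign, hαlt, h1]
  · nlinarith [key2, hv]
end
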